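/- Let (G,P) be a quasi-lattice ordered group. Let F ⊆ P be a finite subset and suppose that for each p ∈ F a set Ω_p ∈ B_P with p ∈ Ω_p is given. Then there exists a finite subset E ⊆ P with E ∩ F = ∅ such that P = (⋃_{p∈F} Ω_p) ∪ (⋃_{q∈E} qP). -/

import Mathlib

/-- The order on `G` induced by the submonoid `P`: `g ≤ h` iff `g⁻¹ * h ∈ P`. -/
def QLe {G : Type*} [Group G] (P : Submonoid G) (g h : G) : Prop := g⁻¹ * h ∈ P

/-- `u` is the least upper bound of `g` and `h` with respect to `QLe P`. -/
def QLub {G : Type*} [Group G] (P : Submonoid G) (g h u : G) : Prop :=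
  QLe P g u ∧ QLe P h u ∧ ∀ v, QLe P g v → QLe P h v → QLe P u v

/-- `(G, P)` is a quasi-lattice ordered group. -/
structure QuasiLatticeOrdered {G : Type*} [Group G] (P : Submonoid G) : Prop where
  gen : Subgroup.closure (P : Set G) = ⊤
  cap : ∀ g ∈ P, g⁻¹ ∈ P → g = 1
  lub : ∀ g h : G, (∃ u, QLe P g u ∧ QLe P h u) → ∃ u, QLub P g h u

/-- Membership in the algebra `B_P` of subsets of `P` generated by the sets
`pP = {x | p⁻¹ x ∈ P}`, `p ∈ P`: the smallest collection of subsets containing the sets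
`pP` and closed under complements in `P`, finite unions and finite intersections. -/
inductive MemBP {G : Type*} [Group G] (P : Submonoid G) : Set G → Prop
  | basic (p : G) (hp : p ∈ P) : MemBP P {x | QLe P p x}
  | compl (Ω : Set G) : MemBP P Ω → MemBP P ((P : Set G) \ Ω)
  | union (Ω₁ Ω₂ : Set G) : MemBP P Ω₁ → MemBP P Ω₂ → MemBP P (Ω₁ ∪ Ω₂)
  | inter (Ω₁ Ω₂ : Set G) : MemBP P Ω₁ → MemBP P Ω₂ → MemBP P (Ω₁ ∩ Ω₂)

/-- For a finite set `J ⊆ P \ {e}`, `Ω_J = ⋂_{q ∈ J} (P \ qP)`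
(with the convention `Ω_∅ = P`). -/
def OmegaJ {G : Type*} [Group G] (P : Submonoid G) (J : Finset G) : Set G :=
  (P : Set G) ∩ ⋂ q ∈ J, {x | QLe P q x}ᶜ

/-!
Every `Ω ∈ B_P` is locally constant on cones: for `p ∈ P` there are finitely many `q > p`
such that membership in `Ω` is the same for `p` and for every `x ≥ p` lying above none of
these `q` (for a basic set `rP` the only exception is the cone at `p ∨ r`). Now cover `qP`
by induction on the number of elements of `F` above `q`: if `q ∉ F`, take `E = {q}`; if
`q ∈ F`, then `qP ⊆ Ω_q ∪ ⋃_{r ∈ J} rP` since `q ∈ Ω_q`, and each `r ∈ J` has strictly fewer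
elements of `F` above it. The case `q = e` gives the theorem.
-/

section

variable {G : Type*} [Group G] {P : Submonoid G}

namespace QLe

theorem refl (g : G) : QLe P g g := by
  simpa only [QLe, inv_mul_cancel] using P.one_mem

theorem trans {a b c : G} (hab : QLe P a b) (hbc : QLe P b c) : QLe P a c := by
  simpa only [QLe, mul_assoc, mul_inv_cancel_left] using P.mul_mem hab hbc

theorem mem_of_mem {a b : G} (hab : QLe P a b) (ha : a ∈ P) : b ∈ P := by
  simpa only [mul_inv_cancel_left] using P.mul_mem ha hab

theorem antisymm (hQL : QuasiLatticeOrdered P) {a b : G} (hab : QLe P a b) (hba : QLe P b a) :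
    a = b := by
  have hinv : (a⁻¹ * b)⁻¹ ∈ P := by rwa [mul_inv_rev, inv_inv]
  simpa only [mul_one, mul_inv_cancel_left] using congrArg (a * ·) (hQL.cap _ hab hinv).symm

end QLe

theorem qLe_one_iff {x : G} : QLe P 1 x ↔ x ∈ P := by
  simp only [QLe, inv_one, one_mul]

theorem MemBP.subset {Ω : Set G} (hΩ : MemBP P Ω) : Ω ⊆ P := by
  induction hΩ with
  | basic p hp => exact fun x hx => QLe.mem_of_mem hx hp
  | compl _ _ _ => exact Set.sdiff_subset
  | union _ _ _ _ ih₁ ih₂ => exact Set.union_subset ih₁ ih₂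
  | inter _ _ _ _ ih₁ _ => exact Set.inter_subset_left.trans ih₁

theorem MemBP.exists_mem_iff_of_le (hQL : QuasiLatticeOrdered P) {Ω : Set G} (hΩ : MemBP P Ω)
    {p : G} (hp : p ∈ P) :
    ∃ J : Finset G, (∀ q ∈ J, QLe P p q ∧ q ≠ p) ∧
      ∀ x, QLe P p x → (∀ q ∈ J, ¬ QLe P q x) → (x ∈ Ω ↔ p ∈ Ω) := by
  classical
  induction hΩ with
  | basic r _ =>
    by_cases hrp : QLe P r p
    · exact ⟨∅, by simp, fun x hpx _ => iff_of_true (hrp.trans hpx) hrp⟩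
    by_cases hbdd : ∃ u, QLe P p u ∧ QLe P r u
    · obtain ⟨u, hpu, hru, hleast⟩ := hQL.lub p r hbdd
      refine ⟨{u}, ?_, fun x hpx hx => iff_of_false (fun hrx => ?_) hrp⟩
      · simp only [Finset.mem_singleton, forall_eq]
        exact ⟨hpu, by rintro rfl; exact hrp hru⟩
      · exact hx u (Finset.mem_singleton_self u) (hleast x hpx hrx)
    · exact ⟨∅, by simp, fun x hpx _ => iff_of_false (fun hrx => hbdd ⟨x, hpx, hrx⟩) hrp⟩
  | compl _ _ ih =>
    obtain ⟨J, hJ, hconst⟩ := ih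
    refine ⟨J, hJ, fun x hpx hx => ?_⟩
    simp only [Set.mem_sdiff, SetLike.mem_coe, hpx.mem_of_mem hp, hp, true_and,
      hconst x hpx hx]
  | union _ _ _ _ ih₁ ih₂ =>
    obtain ⟨J₁, hJ₁, hconst₁⟩ := ih₁
    obtain ⟨J₂, hJ₂, hconst₂⟩ := ih₂
    refine ⟨J₁ ∪ J₂, fun q hq => (Finset.mem_union.1 hq).elim (hJ₁ q) (hJ₂ q), fun x hpx hx => ?_⟩
    simp only [Finset.mem_union, or_imp, forall_and] at hx
    rw [Set.mem_union, Set.mem_union, hconst₁ x hpx hx.1, hconst₂ x hpx hx.2]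
  | inter _ _ _ _ ih₁ ih₂ =>
    obtain ⟨J₁, hJ₁, hconst₁⟩ := ih₁
    obtain ⟨J₂, hJ₂, hconst₂⟩ := ih₂
    refine ⟨J₁ ∪ J₂, fun q hq => (Finset.mem_union.1 hq).elim (hJ₁ q) (hJ₂ q), fun x hpx hx => ?_⟩
    simp only [Finset.mem_union, or_imp, forall_and] at hx
    rw [Set.mem_inter_iff, Set.mem_inter_iff, hconst₁ x hpx hx.1, hconst₂ x hpx hx.2]

section Cover

variable (P) (F : Finset G) (Ω : G → Set G)

def IsFinitelyCoverable (S : Set G) : Prop :=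
  ∃ E : Finset G, ↑E ⊆ (P : Set G) ∧ (∀ e ∈ E, e ∉ F) ∧
    S ⊆ (⋃ p ∈ F, Ω p) ∪ ⋃ e ∈ E, {x | QLe P e x}

variable {P F Ω}

theorem IsFinitelyCoverable.mono {S T : Set G} (hT : IsFinitelyCoverable P F Ω T)
    (hST : S ⊆ T) :
    IsFinitelyCoverable P F Ω S :=
  let ⟨E, hEP, hEF, hTE⟩ := hT
  ⟨E, hEP, hEF, hST.trans hTE⟩

theorem IsFinitelyCoverable.union {S T : Set G} (hS : IsFinitelyCoverable P F Ω S)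
    (hT : IsFinitelyCoverable P F Ω T) : IsFinitelyCoverable P F Ω (S ∪ T) := by
  classical
  obtain ⟨E₁, hE₁P, hE₁F, hSE₁⟩ := hS
  obtain ⟨E₂, hE₂P, hE₂F, hTE₂⟩ := hT
  refine ⟨E₁ ∪ E₂, by simpa using ⟨hE₁P, hE₂P⟩,
    by simpa [or_imp, forall_and] using ⟨hE₁F, hE₂F⟩, Set.union_subset ?_ ?_⟩
  · refine hSE₁.trans (Set.union_subset_union_right _ ?_)
    exact Set.biUnion_subset_biUnion_left (by simp)
  · refine hTE₂.trans (Set.union_subset_union_right _ ?_)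
    exact Set.biUnion_subset_biUnion_left (by simp)

theorem isFinitelyCoverable_empty : IsFinitelyCoverable P F Ω ∅ :=
  ⟨∅, by simp, by simp, Set.empty_subset _⟩

theorem isFinitelyCoverable_biUnion {ι : Type*} (J : Finset ι) {S : ι → Set G}
    (hS : ∀ i ∈ J, IsFinitelyCoverable P F Ω (S i)) :
    IsFinitelyCoverable P F Ω (⋃ i ∈ J, S i) := by
  classical
  induction J using Finset.induction_on with
  | empty => simpa using isFinitelyCoverable_empty
  | insert i J _ ih =>
    rw [Finset.set_biUnion_insert]
    exact (hS i (J.mem_insert_self i)).union (ih fun j hj => hS j (Finset.mem_insert_of_mem hj))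

theorem isFinitelyCoverable_of_mem {p : G} (hp : p ∈ F) : IsFinitelyCoverable P F Ω (Ω p) :=
  ⟨∅, by simp, by simp, fun _ hx => Or.inl (Set.mem_biUnion hp hx)⟩

theorem isFinitelyCoverable_cone_of_notMem {q : G} (hq : q ∈ P) (hqF : q ∉ F) :
    IsFinitelyCoverable P F Ω {x | QLe P q x} :=
  ⟨{q}, by simpa using hq, by simpa using hqF, fun _ hx => Or.inr (by simpa using hx)⟩

theorem card_filter_qLe_lt (hQL : QuasiLatticeOrdered P) {q r : G} [DecidablePred (QLe P q)]
    [DecidablePred (QLe P r)] (hqF : q ∈ F) (hqr : QLe P q r) (hrq : r ≠ q) :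
    (F.filter (QLe P r)).card < (F.filter (QLe P q)).card := by
  refine Finset.card_lt_card ((Finset.ssubset_iff_of_subset ?_).2 ⟨q, ?_, ?_⟩)
  · exact Finset.monotone_filter_right F fun _ _ hrs => hqr.trans hrs
  · exact Finset.mem_filter.2 ⟨hqF, QLe.refl q⟩
  · exact fun hq => hrq (hqr.antisymm hQL (Finset.mem_filter.1 hq).2).symm

theorem isFinitelyCoverable_cone (hQL : QuasiLatticeOrdered P)
    (hΩ : ∀ p ∈ F, MemBP P (Ω p) ∧ p ∈ Ω p) {q : G} (hq : q ∈ P) :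
    IsFinitelyCoverable P F Ω {x | QLe P q x} := by
  classical
  induction hn : (F.filter (QLe P q)).card using Nat.strong_induction_on generalizing q with
  | _ n ih =>
  by_cases hqF : q ∈ F
  swap
  · exact isFinitelyCoverable_cone_of_notMem hq hqF
  obtain ⟨hmem, hqΩ⟩ := hΩ q hqF
  obtain ⟨J, hJ, hconst⟩ := hmem.exists_mem_iff_of_le hQL hq
  have hcone : {x | QLe P q x} ⊆ Ω q ∪ ⋃ r ∈ J, {x | QLe P r x} := by
    intro x hqx
    by_contra hx
    simp only [Set.mem_union, Set.mem_iUnion, not_or, not_exists] at hx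
    exact hx.1 ((hconst x hqx fun r hr hrx => hx.2 r hr hrx).2 hqΩ)
  refine ((isFinitelyCoverable_of_mem hqF).union
    (isFinitelyCoverable_biUnion J fun r hr => ?_)).mono hcone
  obtain ⟨hqr, hrq⟩ := hJ r hr
  exact ih _ (hn ▸ card_filter_qLe_lt hQL hqF hqr hrq) (hqr.mem_of_mem hq) rfl

end Cover

end

theorem stmt5_general {G : Type*} [Group G] (P : Submonoid G) (hQL : QuasiLatticeOrdered P)
    (F : Finset G) (Ω : G → Set G)
    (hΩ : ∀ p ∈ F, MemBP P (Ω p) ∧ p ∈ Ω p) :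
    ∃ E : Finset G, ↑E ⊆ (P : Set G) ∧ (∀ q ∈ E, q ∉ F) ∧
      (P : Set G) = (⋃ p ∈ F, Ω p) ∪ ⋃ q ∈ E, {x | QLe P q x} := by
  obtain ⟨E, hEP, hEF, hcover⟩ := isFinitelyCoverable_cone hQL hΩ P.one_mem
  refine ⟨E, hEP, hEF, subset_antisymm (fun x hx => hcover (qLe_one_iff.2 hx)) ?_⟩
  refine Set.union_subset (Set.iUnion₂_subset fun p hp => (hΩ p hp).1.subset) ?_
  exact Set.iUnion₂_subset fun e he x hex => hex.mem_of_mem (hEP he)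

/-- If `F ⊆ P` is finite and for each `p ∈ F` a set `Ω p ∈ B_P` containing `p` is given,
then there is a finite `E ⊆ P` with `E ∩ F = ∅` such that
`P = (⋃_{p ∈ F} Ω p) ∪ (⋃_{q ∈ E} qP)`. -/
theorem stmt5 {G : Type*} [Group G] (P : Submonoid G) (hQL : QuasiLatticeOrdered P)
    (F : Finset G) (hF : ↑F ⊆ (P : Set G)) (Ω : G → Set G)
    (hΩ : ∀ p ∈ F, MemBP P (Ω p) ∧ p ∈ Ω p) :
    ∃ E : Finset G, ↑E ⊆ (P : Set G) ∧ (∀ q ∈ E, q ∉ F) ∧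
      (P : Set G) = (⋃ p ∈ F, Ω p) ∪ ⋃ q ∈ E, {x | QLe P q x} :=
  stmt5_general P hQL F Ω hΩ
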